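/- If the mixed second partial derivatives ∂²f̲/∂x_j∂x_i and ∂²f̅/∂x_j∂x_i both exist at x and the first gH-partial derivative ∂f̂/∂x_i is μ-increasing with respect to x_j near x (with ∂f̂/∂x_i(y) = [∂f̲/∂x_i(y), ∂f̅/∂x_i(y)] in a neighborhood, which holds when f̂ is μ-increasing in x_i there), then the second gH-partial derivative ∂²f̂/∂x_j∂x_i exists at x and equals [∂²f̲/∂x_j∂x_i(x), ∂²f̅/∂x_j∂x_i(x)]. -/

import Mathlib

/-!
The endpoints of the gH difference quotient of `[plo, phi]` are the min and max of the
difference quotients of `plo` and `phi`, which converge to `d2lo` and `d2hi`. So it suffices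
to know `d2lo ≤ d2hi`, and this is the μ-increasing hypothesis: the spread `phi - plo` does
not decrease to the right of `x` in direction `j`, so its right derivative `d2hi - d2lo` is
nonnegative.
-/

open Filter Topology

theorem HasDerivAt.tendsto_sub_div {g : ℝ → ℝ} {g' t : ℝ} (hg : HasDerivAt g g' t) :
    Tendsto (fun h => (g (t + h) - g t) / h) (𝓝[≠] 0) (𝓝 g') := by
  simpa only [smul_eq_mul, div_eq_inv_mul] using hg.tendsto_slope_zero

theorem HasDerivAt.le_of_eventually_sub_le_sub {f g : ℝ → ℝ} {a b t : ℝ}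
    (hf : HasDerivAt f a t) (hg : HasDerivAt g b t)
    (hspread : ∀ᶠ h in 𝓝[>] 0, g t - f t ≤ g (t + h) - f (t + h)) : a ≤ b := by
  refine sub_nonneg.mp (ge_of_tendsto (hg.sub hf).tendsto_slope_zero_right ?_)
  filter_upwards [hspread, self_mem_nhdsWithin] with h hle (hpos : 0 < h)
  exact smul_nonneg (inv_nonneg.mpr hpos.le) (by simp only [Pi.sub_apply]; linarith)

theorem tendsto_update_add_nhds_zero {ι E : Type*} [DecidableEq ι] [TopologicalSpace E]
    [AddMonoid E] [ContinuousAdd E] (x : ι → E) (j : ι) :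
    Tendsto (fun h : E => Function.update x j (x j + h)) (𝓝 0) (𝓝 x) := by
  have hcont : Continuous fun h : E => Function.update x j (x j + h) :=
    continuous_const.update j (continuous_const.add continuous_id)
  simpa using hcont.tendsto 0

theorem Filter.Tendsto.min_max_of_le {α R : Type*} [LinearOrder R] [TopologicalSpace R]
    [OrderClosedTopology R] {l : Filter α} {u v : α → R} {a b : R}
    (hu : Tendsto u l (𝓝 a)) (hv : Tendsto v l (𝓝 b)) (hab : a ≤ b) :
    Tendsto (fun h => min (u h) (v h)) l (𝓝 a) ∧
      Tendsto (fun h => max (u h) (v h)) l (𝓝 b) := by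
  refine ⟨?_, ?_⟩
  · simpa only [min_eq_left hab] using hu.min hv
  · simpa only [max_eq_right hab] using hu.max hv

theorem gH_second_partial_general
    (n : ℕ)
    (plo phi : (Fin n → ℝ) → ℝ) (x : Fin n → ℝ) (j : Fin n)
    (U : Set (Fin n → ℝ)) (hU : U ∈ nhds x)
    (hmono : ∀ y ∈ U, ∀ h : ℝ, 0 < h → Function.update y j (y j + h) ∈ U →
      phi y - plo y ≤
        phi (Function.update y j (y j + h)) - plo (Function.update y j (y j + h)))
    (d2lo d2hi : ℝ)
    (hd2lo : HasDerivAt (fun t => plo (Function.update x j t)) d2lo (x j))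
    (hd2hi : HasDerivAt (fun t => phi (Function.update x j t)) d2hi (x j)) :
    Tendsto (fun h : ℝ =>
        min ((plo (Function.update x j (x j + h)) - plo x) / h)
            ((phi (Function.update x j (x j + h)) - phi x) / h))
      (nhdsWithin 0 {(0:ℝ)}ᶜ) (nhds d2lo) ∧
    Tendsto (fun h : ℝ =>
        max ((plo (Function.update x j (x j + h)) - plo x) / h)
            ((phi (Function.update x j (x j + h)) - phi x) / h))
      (nhdsWithin 0 {(0:ℝ)}ᶜ) (nhds d2hi) := by
  have hslope_lo := hd2lo.tendsto_sub_div
  have hslope_hi := hd2hi.tendsto_sub_div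
  simp only [Function.update_eq_self] at hslope_lo hslope_hi
  have hnear : ∀ᶠ h in 𝓝[>] (0 : ℝ), Function.update x j (x j + h) ∈ U :=
    nhdsWithin_le_nhds ((tendsto_update_add_nhds_zero x j).eventually_mem hU)
  have hd2le : d2lo ≤ d2hi := by
    refine hd2lo.le_of_eventually_sub_le_sub hd2hi ?_
    filter_upwards [hnear, self_mem_nhdsWithin] with h hmem hpos
    simpa only [Function.update_eq_self] using hmono x (mem_of_mem_nhds hU) h hpos hmem
  exact hslope_lo.min_max_of_le hslope_hi hd2le

/-- Second gH-partial derivative: suppose on a neighborhood `U` of `x` the first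
partials `∂f̲/∂xᵢ = plo` and `∂f̅/∂xᵢ = phi` exist with `plo ≤ phi` on `U` (so that
`∂f̂/∂xᵢ = [plo, phi]` on `U`), `∂f̂/∂xᵢ` is μ-increasing with respect to `x_j` on `U`,
and the mixed second partials `∂²f̲/∂x_j∂xᵢ(x) = d2lo`, `∂²f̅/∂x_j∂xᵢ(x) = d2hi` exist.
Then the second gH-partial `∂²f̂/∂x_j∂xᵢ(x)` exists and equals `[d2lo, d2hi]`. -/
theorem gH_second_partial
    (n : ℕ) (flo fhi : (Fin n → ℝ) → ℝ) (hle : ∀ y, flo y ≤ fhi y)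
    (plo phi : (Fin n → ℝ) → ℝ) (x : Fin n → ℝ) (i j : Fin n)
    (U : Set (Fin n → ℝ)) (hU : U ∈ nhds x)
    (hplo : ∀ y ∈ U, HasDerivAt (fun t => flo (Function.update y i t)) (plo y) (y i))
    (hphi : ∀ y ∈ U, HasDerivAt (fun t => fhi (Function.update y i t)) (phi y) (y i))
    (hple : ∀ y ∈ U, plo y ≤ phi y)
    (hmono : ∀ y ∈ U, ∀ h : ℝ, 0 < h → Function.update y j (y j + h) ∈ U →
      phi y - plo y ≤
        phi (Function.update y j (y j + h)) - plo (Function.update y j (y j + h)))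
    (d2lo d2hi : ℝ)
    (hd2lo : HasDerivAt (fun t => plo (Function.update x j t)) d2lo (x j))
    (hd2hi : HasDerivAt (fun t => phi (Function.update x j t)) d2hi (x j)) :
    Tendsto (fun h : ℝ =>
        min ((plo (Function.update x j (x j + h)) - plo x) / h)
            ((phi (Function.update x j (x j + h)) - phi x) / h))
      (nhdsWithin 0 {(0:ℝ)}ᶜ) (nhds d2lo) ∧
    Tendsto (fun h : ℝ =>
        max ((plo (Function.update x j (x j + h)) - plo x) / h)
            ((phi (Function.update x j (x j + h)) - phi x) / h))
      (nhdsWithin 0 {(0:ℝ)}ᶜ) (nhds d2hi) :=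
  gH_second_partial_general n plo phi x j U hU hmono d2lo d2hi hd2lo hd2hi
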